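/- arXiv:2104.03571 — 2 statements merged into one kernel-verified Lean document; each statement's English description precedes it below -/
import Mathlib

section
/- Natural revision is a lexicographic revision by the conjunction of current beliefs: for every total preorder C and formula P, the preorder C nat(P) is equivalent to C lex(K), where K is a formula whose models are exactly min(C,P), the minimal models of P in C. -/
open Set
open scoped Classical

variable {M : Type*}

namespace BeliefRevision

/-- `minSet C P`: the minimal models of `P` according to the total preorder `C`,
i.e. `C(i) ∩ Mod(P)` for the least `i` making this nonempty. -/
noncomputable def minSet : List (Set M) → Set M → Set M
  | [], _ => ∅
  | X :: rest, P => if (X ∩ P).Nonempty then X ∩ P else minSet rest P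

/-- Equivalence of total preorders: same minimal models for every formula. -/
def equivC (C C' : List (Set M)) : Prop :=
  ∀ P : Set M, minSet C P = minSet C' P

/-- A total preorder: an ordered partition (empty classes allowed) of all models. -/
def IsPartition (C : List (Set M)) : Prop :=
  C.Pairwise Disjoint ∧ C.foldr (· ∪ ·) ∅ = Set.univ

/-- Lexicographic revision. -/
def lex (C : List (Set M)) (L : Set M) : List (Set M) :=
  C.map (· ∩ L) ++ C.map (· \ L)

/-- Refinement. -/
def refi (C : List (Set M)) (R : Set M) : List (Set M) :=
  C.flatMap fun X => [X ∩ R, X \ R]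

/-- Natural revision: `[C(i)∩P, C(0),...,C(i-1), C(i)\P, C(i+1),...,C(m)]`. -/
noncomputable def natr : List (Set M) → Set M → List (Set M)
  | [], _ => []
  | X :: rest, P =>
    if (X ∩ P).Nonempty then (X ∩ P) :: (X \ P) :: rest
    else
      match natr rest P with
      | a :: r => a :: X :: r
      | [] => [X]

/-- Severe antiwithdrawal: merge classes `0..i` where `i` is least with `C(i)∩P ≠ ∅`. -/
noncomputable def sevw : List (Set M) → Set M → List (Set M)
  | [], _ => []
  | X :: rest, P =>
    if (X ∩ P).Nonempty then X :: rest
    else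
      match sevw rest P with
      | a :: r => (X ∪ a) :: r
      | [] => [X]

/-- Restrained revision. -/
noncomputable def res : List (Set M) → Set M → List (Set M)
  | [], _ => []
  | X :: rest, P =>
    if (X ∩ P).Nonempty then
      (X ∩ P) :: (X \ P) :: rest.flatMap (fun Y => [Y ∩ P, Y \ P])
    else
      match res rest P with
      | a :: r => a :: (X ∩ P) :: (X \ P) :: r
      | [] => [X ∩ P, X \ P]

/-- Very radical revision. -/
def rad (C : List (Set M)) (P : Set M) : List (Set M) :=
  C.map (· ∩ P) ++ [C.foldr (· ∪ ·) ∅ \ P]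

/-- Severe revision: `[C(i)∩P, (C(0)∪...∪C(i))\P, C(i+1),...,C(m)]`. -/
noncomputable def sevr : List (Set M) → Set M → List (Set M)
  | [], _ => []
  | X :: rest, P =>
    if (X ∩ P).Nonempty then (X ∩ P) :: (X \ P) :: rest
    else
      match sevr rest P with
      | a :: b :: r => a :: (X ∪ b) :: r
      | l => X :: l

/-- Moderate severe revision. -/
noncomputable def msev (C : List (Set M)) (P : Set M) : List (Set M) :=
  C.map (· ∩ P) ++ (sevw C P).map (· \ P)

/-- Merge `A` with the first nonempty class of the list (helper for `psev`). -/
noncomputable def mergeJ (A : Set M) : List (Set M) → List (Set M)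
  | [] => [A]
  | Y :: r => if Y.Nonempty then (A ∪ Y) :: r else mergeJ A r

/-- Plain severe revision:
`[C(i)∩P, C(0)∪...∪(C(i)\P)∪C(j), C(j+1),...,C(m)]` with `i` least with
`C(i)∩P ≠ ∅` and `j` the least index `> i` with `C(j) ≠ ∅`. -/
noncomputable def psev : List (Set M) → Set M → List (Set M)
  | [], _ => []
  | X :: rest, P =>
    if (X ∩ P).Nonempty then (X ∩ P) :: mergeJ (X \ P) rest
    else
      match psev rest P with
      | a :: b :: r => a :: (X ∪ b) :: r
      | l => X :: l

/-- Full meet revision. -/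
noncomputable def full (C : List (Set M)) (P : Set M) : List (Set M) :=
  [minSet C P, Set.univ \ minSet C P]

/-- `maxset F [F₁,...,Fₖ]`: conjoin each `Fᵢ` in order whenever consistent. -/
noncomputable def maxset : Set M → List (Set M) → Set M
  | F, [] => F
  | F, L :: rest => maxset (if (F ∩ L).Nonempty then F ∩ L else F) rest

/-- The underformula `under(S; Lₙ,...,L₁)`. -/
noncomputable def under : Set M → List (Set M) → Set M
  | _, [] => Set.univ
  | S, L :: rest =>
    if (S ∩ L).Nonempty then L ∩ under (S ∩ L) rest else L ∪ under S rest

/-- `upTo C S = C(0) ∪ ... ∪ C(i)` where `i` is least with `C(i)∩S ≠ ∅`. -/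
noncomputable def upTo : List (Set M) → Set M → Set M
  | [], _ => ∅
  | X :: rest, S => if (X ∩ S).Nonempty then X else X ∪ upTo rest S

noncomputable def longestAux : Set M → List (Set M) → Set M
  | A, [] => A
  | A, L :: rest => if (A ∩ L).Nonempty then longestAux (A ∩ L) rest else A

/-- Longest consistent conjunction of a sequence of formulas. -/
noncomputable def longest : List (Set M) → Set M
  | [] => Set.univ
  | L :: rest => longestAux L rest

/-- `rev` is a bottom-refining revision on `(C,P)`: it is a revision
(`min(C rev(P),⊤) = min(C,P)`) and, whenever `C(0)∩Mod(P) ≠ ∅`, class zero of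
the result is `C(0)∩Mod(P)` and class one is `C(0)\Mod(P)`. -/
noncomputable def BottomRefining (rev : List (Set M) → Set M → List (Set M))
    (C : List (Set M)) (P : Set M) : Prop :=
  minSet (rev C P) Set.univ = minSet C P ∧
  ((C.getD 0 ∅ ∩ P).Nonempty →
    (rev C P).getD 0 ∅ = C.getD 0 ∅ ∩ P ∧
    (rev C P).getD 1 ∅ = C.getD 0 ∅ \ P)

/-!
With `K = min(C,P)`, natural revision of a partition is literally `K :: C.map (· \ K)`:
`K` moves to the front and every class loses its part of `K`. Lexicographic revision by `K`
first lists the slices `C(j) ∩ K`, and the first of them meeting `Q` is all of `K ∩ Q`,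
since `min(C, K ∩ Q) = K ∩ Q`; so it also behaves like `K` followed by the `C(j) \ K`.
-/

variable (C : List (Set M)) (P Q : Set M)

lemma minSet_subset : minSet C P ⊆ P := by
  induction C with
  | nil => exact empty_subset P
  | cons X rest ih =>
    rw [minSet]
    split_ifs
    · exact inter_subset_right
    · exact ih

lemma minSet_nonempty {C : List (Set M)} {P : Set M}
    (h : (C.foldr (· ∪ ·) ∅ ∩ P).Nonempty) : (minSet C P).Nonempty := by
  induction C with
  | nil => simp at h
  | cons X rest ih =>
    rw [minSet]
    split_ifs with hX
    · exact hX
    · obtain ⟨x, hxX | hxRest, hxP⟩ := h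
      · exact absurd ⟨x, hxX, hxP⟩ hX
      · exact ih ⟨x, hxRest, hxP⟩

lemma minSet_append (L₁ L₂ : List (Set M)) :
    minSet (L₁ ++ L₂) Q = if (minSet L₁ Q).Nonempty then minSet L₁ Q else minSet L₂ Q := by
  induction L₁ with
  | nil => simp [minSet]
  | cons X rest ih => by_cases hX : (X ∩ Q).Nonempty <;> simp [minSet, hX, ih]

lemma minSet_map_inter (K : Set M) : minSet (C.map (· ∩ K)) Q = minSet C (K ∩ Q) := by
  induction C with
  | nil => rfl
  | cons X rest ih => simp only [List.map_cons, minSet, inter_assoc, ih]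

lemma minSet_empty : minSet C (∅ : Set M) = ∅ :=
  subset_empty_iff.mp (minSet_subset C ∅)

lemma minSet_minSet_inter : minSet C (minSet C P ∩ Q) = minSet C P ∩ Q := by
  induction C with
  | nil => exact (empty_inter Q).symm
  | cons X rest ih =>
    by_cases hXP : (X ∩ P).Nonempty
    · rw [show minSet (X :: rest) P = X ∩ P from if_pos hXP]
      by_cases hXPQ : (X ∩ P ∩ Q).Nonempty
      · have hsub : X ∩ P ∩ Q ⊆ X := inter_subset_left.trans inter_subset_left
        rw [minSet, inter_eq_self_of_subset_right hsub, if_pos hXPQ]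
      · rw [not_nonempty_iff_eq_empty.1 hXPQ, minSet_empty]
    · have hX : ¬ (X ∩ (minSet rest P ∩ Q)).Nonempty := fun ⟨x, hxX, hxK, _⟩ =>
        hXP ⟨x, hxX, minSet_subset rest P hxK⟩
      simp only [minSet, hXP, hX, if_false, ih]

lemma lex_minSet_equivC :
    equivC (lex C (minSet C P)) (minSet C P :: C.map (· \ minSet C P)) := by
  intro Q
  rw [lex, minSet_append, minSet_map_inter, minSet_minSet_inter, minSet]

lemma natr_eq_cons {C : List (Set M)} (hC : C.Pairwise Disjoint) {P : Set M}
    (hne : (minSet C P).Nonempty) :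
    natr C P = minSet C P :: C.map (· \ minSet C P) := by
  induction C with
  | nil => exact absurd hne not_nonempty_empty
  | cons X rest ih =>
    rw [List.pairwise_cons] at hC
    by_cases hXP : (X ∩ P).Nonempty
    · have hrest : rest.map (· \ (X ∩ P)) = rest := (List.map_congr_left fun Y hY =>
        sdiff_eq_self_iff_disjoint.2 ((hC.1 Y hY).symm.mono_right inter_subset_left).symm).trans
        (List.map_id' rest)
      simp [natr, minSet, hXP, sdiff_self_inter, hrest]
    · rw [minSet, if_neg hXP] at hne ⊢
      have hX : X \ minSet rest P = X := sdiff_eq_left.2 <| disjoint_left.2 fun x hxX hxK =>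
        hXP ⟨x, hxX, minSet_subset rest P hxK⟩
      simp [natr, hXP, ih hC.2 hne, hX]

/-- Natural revision is a lexicographic revision by a formula whose models are
exactly `min(C,P)`. -/
theorem natr_eq_lex (C : List (Set M)) (hC : IsPartition C) (P K : Set M)
    (hP : P.Nonempty) (hK : K = minSet C P) :
    equivC (natr C P) (lex C K) := by
  subst hK
  have hne : (minSet C P).Nonempty := minSet_nonempty (by rw [hC.2, univ_inter]; exact hP)
  rw [natr_eq_cons hC.1 hne]
  exact fun Q => (lex_minSet_equivC C P Q).symm

end BeliefRevision
end

section
/- For a model I and consistent formula S, the class of I in C = ∅ lex(L_1)...lex(L_n) is at most the least class containing a model of S if and only if I satisfies under(S; L_n,...,L_1); equivalently, I ⊨ maxset(S ∨ Form({I}), L_n,...,L_1) if and only if I ⊨ under(S; L_n,...,L_1). -/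
open Set
open scoped Classical

variable {M : Type*}

namespace BeliefRevision

/-!
Write `Cₙ = ∅ lex(L₁)...lex(Lₙ)`. Every `Cₙ` covers all models, so revising by `L` either finds
a model of `S ∧ L` among the `L`-part of `C`, in which case the classes up to `S` are those of
`C` up to `S ∧ L`, intersected with `L`; or it does not, in which case all of the `L`-part lies
below `S` and the rest is `C` up to `S` with `L` removed. This is exactly the recursion defining
`under`, read from `Lₙ` down to `L₁`.

For `maxset`, adding the single model `I` to `S` changes nothing while `S ∧ L` stays consistent,
except that `I` survives exactly when it satisfies every such `L`; once `S ∧ L` is inconsistent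
but `I ⊨ L`, only `I` is left, and it survives all later steps.
-/

lemma mem_foldr_union {x : M} {A : List (Set M)} :
    x ∈ A.foldr (· ∪ ·) ∅ ↔ ∃ X ∈ A, x ∈ X := by
  induction A with
  | nil => simp
  | cons X r ih => simp [ih]

section upTo

variable {A : List (Set M)} {L S : Set M}

lemma upTo_map_inter :
    upTo (A.map (· ∩ L)) S = L ∩ upTo A (S ∩ L) := by
  induction A with
  | nil => simp [upTo]
  | cons X r ih =>
    have hmeet : X ∩ L ∩ S = X ∩ (S ∩ L) := by rw [inter_assoc, inter_comm L S]
    simp only [List.map, upTo, ih, hmeet]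
    split_ifs
    · exact inter_comm X L
    · rw [inter_union_distrib_left, inter_comm L X]

lemma upTo_append_of_exists (h : ∃ X ∈ A, (X ∩ S).Nonempty) (B : List (Set M)) :
    upTo (A ++ B) S = upTo A S := by
  induction A with
  | nil => simp at h
  | cons X r ih =>
    simp only [List.cons_append, upTo]
    split_ifs with hX
    · rfl
    · obtain ⟨Y, hY, hYS⟩ := h
      have hYr : Y ∈ r := (List.mem_cons.1 hY).resolve_left fun hYX => hX (hYX ▸ hYS)
      rw [ih ⟨Y, hYr, hYS⟩]

lemma upTo_append_of_not_exists (h : ¬∃ X ∈ A, (X ∩ S).Nonempty) (B : List (Set M)) :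
    upTo (A ++ B) S = A.foldr (· ∪ ·) ∅ ∪ upTo B S := by
  induction A with
  | nil => simp
  | cons X r ih =>
    simp only [List.mem_cons, exists_eq_or_imp, not_or] at h
    simp only [List.cons_append, upTo, if_neg h.1, List.foldr, ih h.2, union_assoc]

end upTo

section lex

variable {C : List (Set M)} {L S : Set M}

lemma covers_lex (hC : ∀ x, ∃ X ∈ C, x ∈ X) : ∀ x, ∃ X ∈ lex C L, x ∈ X := by
  intro x
  obtain ⟨X, hX, hxX⟩ := hC x
  by_cases hxL : x ∈ L
  · exact ⟨X ∩ L, List.mem_append_left _ (List.mem_map_of_mem hX), hxX, hxL⟩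
  · exact ⟨X \ L, List.mem_append_right _ (List.mem_map_of_mem hX), hxX, hxL⟩

lemma upTo_lex_of_nonempty (hC : ∀ x, ∃ X ∈ C, x ∈ X) (h : (S ∩ L).Nonempty) :
    upTo (lex C L) S = L ∩ upTo C (S ∩ L) := by
  obtain ⟨x, hxS, hxL⟩ := h
  obtain ⟨X, hX, hxX⟩ := hC x
  have hmeet : ∃ Y ∈ C.map (· ∩ L), (Y ∩ S).Nonempty :=
    ⟨X ∩ L, List.mem_map_of_mem hX, x, ⟨hxX, hxL⟩, hxS⟩
  rw [lex, upTo_append_of_exists hmeet, upTo_map_inter]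

lemma upTo_lex_of_not_nonempty (hC : ∀ x, ∃ X ∈ C, x ∈ X) (h : ¬(S ∩ L).Nonempty) :
    upTo (lex C L) S = L ∪ upTo C S := by
  have hdisj : S ∩ L = ∅ := not_nonempty_iff_eq_empty.1 h
  have hno_meet : ¬∃ Y ∈ C.map (· ∩ L), (Y ∩ S).Nonempty := by
    rintro ⟨Y, hY, hYS⟩
    obtain ⟨X, -, rfl⟩ := List.mem_map.1 hY
    exact h (hYS.mono fun x hx => ⟨hx.2, hx.1.2⟩)
  have hunion : (C.map (· ∩ L)).foldr (· ∪ ·) ∅ = L := by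
    ext x
    simp only [mem_foldr_union, List.mem_map]
    constructor
    · rintro ⟨_, ⟨X, -, rfl⟩, -, hxL⟩
      exact hxL
    · intro hxL
      obtain ⟨X, hX, hxX⟩ := hC x
      exact ⟨X ∩ L, ⟨X, hX, rfl⟩, hxX, hxL⟩
  have hdiff : C.map (· \ L) = C.map (· ∩ Lᶜ) := rfl
  have hS : S ∩ Lᶜ = S := inter_eq_left.2 fun x hxS hxL => hdisj.subset ⟨hxS, hxL⟩
  rw [lex, upTo_append_of_not_exists hno_meet, hunion, hdiff, upTo_map_inter, hS,
    union_inter_distrib_left, union_compl_self, univ_inter]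

end lex

lemma covers_foldr_lex (ls : List (Set M)) :
    ∀ x, ∃ X ∈ ls.foldr (fun L C => lex C L) [univ], x ∈ X := by
  induction ls with
  | nil => exact fun x => ⟨univ, List.mem_singleton_self _, trivial⟩
  | cons L r ih => exact covers_lex ih

lemma upTo_foldr_lex (ls : List (Set M)) (S : Set M) :
    upTo (ls.foldr (fun L C => lex C L) [univ]) S = under S ls := by
  induction ls generalizing S with
  | nil => simp only [List.foldr, upTo, under]; split_ifs <;> simp
  | cons L r ih =>
    simp only [List.foldr, under]
    split_ifs with h
    · rw [upTo_lex_of_nonempty (covers_foldr_lex r) h, ih]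
    · rw [upTo_lex_of_not_nonempty (covers_foldr_lex r) h, ih]

lemma maxset_subset (F : Set M) (ls : List (Set M)) : maxset F ls ⊆ F := by
  induction ls generalizing F with
  | nil => exact subset_rfl
  | cons L r ih =>
    rw [maxset]
    split_ifs
    · exact (ih _).trans inter_subset_left
    · exact ih _

lemma maxset_singleton (I : M) (ls : List (Set M)) : maxset {I} ls = {I} := by
  induction ls with
  | nil => rfl
  | cons L r ih =>
    rw [maxset]
    split_ifs with h
    · rw [inter_eq_left.2 (singleton_subset_iff.2 (singleton_inter_nonempty.1 h)), ih]
    · exact ih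

lemma mem_maxset_union_singleton_iff (I : M) (ls : List (Set M)) (S : Set M) :
    I ∈ maxset (S ∪ {I}) ls ↔ I ∈ under S ls := by
  induction ls generalizing S with
  | nil => simp [maxset, under]
  | cons L r ih =>
    simp only [maxset, under]
    by_cases hIL : I ∈ L
    · have hsplit : (S ∪ {I}) ∩ L = S ∩ L ∪ {I} := by
        rw [union_inter_distrib_right, singleton_inter_of_mem hIL]
      rw [hsplit, if_pos ⟨I, Or.inr rfl⟩]
      split_ifs with hSL
      · rw [ih, mem_inter_iff, and_iff_right hIL]
      · rw [not_nonempty_iff_eq_empty.1 hSL, empty_union, maxset_singleton]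
        simp [hIL]
    · have hsame : (S ∪ {I}) ∩ L = S ∩ L := by
        rw [union_inter_distrib_right, singleton_inter_eq_empty.2 hIL, union_empty]
      rw [hsame]
      split_ifs with hSL
      · simp only [mem_inter_iff, hIL, false_and, iff_false]
        exact fun hI => hIL (maxset_subset _ r hI).2
      · rw [ih, mem_union, or_iff_right hIL]

theorem mem_under_iff_general (Ls : List (Set M)) (S : Set M) (I : M) :
    (I ∈ upTo (Ls.foldl lex [Set.univ]) S ↔ I ∈ under S Ls.reverse) ∧
    (I ∈ maxset (S ∪ {I}) Ls.reverse ↔ I ∈ under S Ls.reverse) := by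
  refine ⟨?_, mem_maxset_union_singleton_iff I Ls.reverse S⟩
  rw [List.foldl_eq_foldr_reverse, upTo_foldr_lex]

/-- For a model `I` and consistent `S`: the class of `I` in
`C = ∅ lex(L₁)...lex(Lₙ)` is at most the least class containing a model of `S`
iff `I ⊨ under(S; Lₙ,...,L₁)`; equivalently,
`I ⊨ maxset(S ∨ Form({I}), Lₙ,...,L₁)` iff `I ⊨ under(S; Lₙ,...,L₁)`. -/
theorem mem_under_iff (Ls : List (Set M)) (S : Set M) (hS : S.Nonempty) (I : M) :
    (I ∈ upTo (Ls.foldl lex [Set.univ]) S ↔ I ∈ under S Ls.reverse) ∧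
    (I ∈ maxset (S ∪ {I}) Ls.reverse ↔ I ∈ under S Ls.reverse) :=
  mem_under_iff_general Ls S I

end BeliefRevision
end
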